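/- For the distribution μ_pow2 that puts mass 1/L on each power of two 2^i for 0 ≤ i < L (L = ⌊log₂ n⌋) and mass 0 elsewhere, the token process started uniformly on {1,...,n} satisfies E(T) = O((log n)²). -/

import Mathlib

/-!
From `a ≥ 1` the process can use the `k = min (log₂ a + 1) L` steps `2^i ≤ a`, each with weight
`1/L`, so the recurrence reads `k T(a) = L + ∑_{i<k} T(a - 2^i)`. The potential
`Φ(a) = size a + ⌊a / 2^(L-1)⌋` is monotone and drops by at least one under the largest available
step, so the averaging inequality gives `T(a) ≤ L Φ(a)` by strong induction. Since `n < 2^(L+1)`,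
`Φ ≤ L + 4` on `[0, n]`, hence `E(T) ≤ L (L + 4) ≤ 5 L²` with `L ≤ log n / log 2`.
-/

/-- The distribution putting mass `1/L` on each power of two `2^i`, `0 ≤ i < L = ⌊log₂ n⌋`. -/
noncomputable def muPow2 (n d : ℕ) : ℝ :=
  if d ∈ (Finset.range (Nat.log 2 n)).image (fun i => 2 ^ i) then
    ((Nat.log 2 n : ℝ))⁻¹ else 0

open Finset

lemma le_of_card_mul_eq_add_sum {ι K : Type*} [DecidableEq ι] [Field K] [LinearOrder K]
    [IsStrictOrderedRing K] {s : Finset ι} {x : ι → K} {t c b : K} {j : ι} (hj : j ∈ s)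
    (h : #s * t = c + ∑ i ∈ s, x i) (hx : ∀ i ∈ s, x i ≤ b) (hxj : c + x j ≤ b) : t ≤ b := by
  have hrest : ∑ i ∈ s.erase j, x i ≤ (#s - 1 : K) * b := by
    have := sum_le_card_nsmul (s.erase j) x b fun i hi => hx i (mem_of_mem_erase hi)
    rwa [card_erase_of_mem hj, nsmul_eq_mul, Nat.cast_pred (card_pos.2 ⟨j, hj⟩)] at this
  have hcard : (0 : K) < #s := by exact_mod_cast card_pos.2 ⟨j, hj⟩
  refine le_of_mul_le_mul_left ?_ hcard
  rw [h, ← add_sum_erase s x hj]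
  linarith

lemma sum_Icc_muPow2_mul (n : ℕ) {a : ℕ} (ha : 1 ≤ a) (g : ℕ → ℝ) :
    ∑ d ∈ Icc 1 a, muPow2 n d * g d
      = (Nat.log 2 n : ℝ)⁻¹ * ∑ i ∈ range (min (Nat.log 2 a + 1) (Nat.log 2 n)), g (2 ^ i) := by
  have hsteps : (Icc 1 a).filter (· ∈ (range (Nat.log 2 n)).image (2 ^ ·))
      = (range (min (Nat.log 2 a + 1) (Nat.log 2 n))).image (2 ^ ·) := by
    ext d
    simp only [mem_filter, mem_Icc, mem_image, mem_range]
    constructor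
    · rintro ⟨⟨-, hda⟩, i, hi, rfl⟩
      have : i ≤ Nat.log 2 a := (Nat.le_log_iff_pow_le one_lt_two (by omega)).2 hda
      exact ⟨i, by omega, rfl⟩
    · rintro ⟨i, hi, rfl⟩
      have : 2 ^ i ≤ a := (Nat.le_log_iff_pow_le one_lt_two (by omega)).1 (by omega)
      exact ⟨⟨Nat.one_le_two_pow, this⟩, i, by omega, rfl⟩
  simp only [muPow2, ite_mul, zero_mul]
  rw [← sum_filter, hsteps, sum_image fun i _ j _ h => Nat.pow_right_injective le_rfl h, mul_sum]

-- `Nat.size a = ⌊log₂ a⌋ + 1` for `a > 0`, and `Nat.size 0 = 0` (unlike `Nat.log 2 0 + 1`).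
def potential (L a : ℕ) : ℕ := a.size + a / 2 ^ (L - 1)

lemma potential_mono (L : ℕ) : Monotone (potential L) := fun _ _ h =>
  add_le_add (Nat.size_le_size h) (Nat.div_le_div_right h)

lemma potential_sub_largest_step_lt (L : ℕ) {a : ℕ} (ha : 0 < a) :
    potential L (a - 2 ^ min (Nat.log 2 a) (L - 1)) < potential L a := by
  have hle : 2 ^ Nat.log 2 a ≤ a := Nat.pow_log_le_self 2 ha.ne'
  have hlt : a < 2 ^ (Nat.log 2 a + 1) := Nat.lt_pow_succ_log_self one_lt_two a
  unfold potential
  rcases le_or_gt (L - 1) (Nat.log 2 a) with hbig | hsmall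
  · have hstep : 2 ^ (L - 1) ≤ a := (Nat.pow_le_pow_right two_pos hbig).trans hle
    have hdiv := Nat.sub_mul_div a (2 ^ (L - 1)) 1
    rw [mul_one] at hdiv
    rw [min_eq_right hbig, hdiv]
    have : 1 ≤ a / 2 ^ (L - 1) := (Nat.one_le_div_iff (by positivity)).2 hstep
    have := Nat.size_le_size (Nat.sub_le a (2 ^ (L - 1)))
    omega
  · have hsmall' : a < 2 ^ (L - 1) := hlt.trans_le (Nat.pow_le_pow_right two_pos hsmall)
    rw [min_eq_left hsmall.le, Nat.div_eq_of_lt hsmall', Nat.div_eq_of_lt (by omega)]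
    have : (a - 2 ^ Nat.log 2 a).size ≤ Nat.log 2 a :=
      Nat.size_le.2 (by rw [pow_succ] at hlt; omega)
    have : Nat.log 2 a < a.size := Nat.lt_size.2 hle
    omega

lemma potential_le {L a : ℕ} (ha : a < 2 ^ (L + 1)) : potential L a ≤ L + 4 := by
  have hsize : a.size ≤ L + 1 := Nat.size_le.2 ha
  have hdiv : a / 2 ^ (L - 1) < 4 := by
    rw [Nat.div_lt_iff_lt_mul (by positivity)]
    calc a < 2 ^ (L + 1) := ha
      _ ≤ 2 ^ (L - 1 + 2) := Nat.pow_le_pow_right two_pos (by omega)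
      _ = 4 * 2 ^ (L - 1) := by ring
  unfold potential
  omega

theorem hittingTime_le_mul_potential {n : ℕ} (hn : 2 ≤ n) {T : ℕ → ℝ} (hT0 : T 0 = 0)
    (hrec : ∀ a ∈ Icc 1 n, (∑ d ∈ Icc 1 a, muPow2 n d) * T a =
      1 + ∑ d ∈ Icc 1 a, muPow2 n d * T (a - d)) (a : ℕ) (han : a ≤ n) :
    T a ≤ Nat.log 2 n * potential (Nat.log 2 n) a := by
  set L := Nat.log 2 n with hLdef
  have hL : 1 ≤ L := Nat.log_pos one_lt_two hn
  induction a using Nat.strong_induction_on with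
  | _ a ih =>
  rcases Nat.eq_zero_or_pos a with rfl | ha
  · rw [hT0]
    positivity
  set k := min (Nat.log 2 a + 1) L with hkdef
  have hstep : k * T a = L + ∑ i ∈ range k, T (a - 2 ^ i) := by
    have hmass := sum_Icc_muPow2_mul n ha fun _ => 1
    simp only [mul_one, sum_const, card_range, nsmul_one] at hmass
    have h := hrec a (mem_Icc.2 ⟨ha, han⟩)
    rw [hmass, sum_Icc_muPow2_mul n ha (T <| a - ·), ← hLdef, ← hkdef] at h
    field_simp at h
    linarith
  have hbound : ∀ i, T (a - 2 ^ i) ≤ L * potential L (a - 2 ^ i) := fun i =>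
    ih _ (Nat.sub_lt ha (Nat.two_pow_pos i)) ((Nat.sub_le _ _).trans han)
  refine le_of_card_mul_eq_add_sum (s := range k) (j := min (Nat.log 2 a) (L - 1))
    (mem_range.2 (by omega)) (by rwa [card_range]) (fun i _ => ?_) ?_
  · exact (hbound i).trans (by gcongr; exact potential_mono L (Nat.sub_le _ _))
  · have hdrop : (potential L (a - 2 ^ min (Nat.log 2 a) (L - 1)) : ℝ) + 1 ≤ potential L a := by
      exact_mod_cast potential_sub_largest_step_lt L ha
    nlinarith [hbound (min (Nat.log 2 a) (L - 1))]

/-- For `μ = μ_pow2`, the token process started uniformly on `[1,n]` satisfies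
`E(T) = O((log n)²)`. `T` is characterized by `T 0 = 0` and the hitting-time recurrence. -/
theorem stmt6 : ∃ C > 0, ∀ n : ℕ, 2 ≤ n → ∀ T : ℕ → ℝ, T 0 = 0 →
    (∀ a ∈ Finset.Icc 1 n,
      (∑ d ∈ Finset.Icc 1 a, muPow2 n d) * T a =
        1 + ∑ d ∈ Finset.Icc 1 a, muPow2 n d * T (a - d)) →
    (1 / (n : ℝ)) * ∑ a ∈ Finset.Icc 1 n, T a ≤ C * Real.log n ^ 2 := by
  have hlog2 : 0 < Real.log 2 := Real.log_pos one_lt_two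
  refine ⟨5 / Real.log 2 ^ 2, by positivity, fun n hn T hT0 hrec => ?_⟩
  set L := Nat.log 2 n
  have hL : (1 : ℝ) ≤ L := by exact_mod_cast Nat.log_pos one_lt_two hn
  have hLlog : (L : ℝ) ≤ Real.log n / Real.log 2 := Real.natLog_le_logb n 2
  have hT : ∀ a ∈ Icc 1 n, T a ≤ L * (L + 4) := fun a ha => by
    have han := (mem_Icc.1 ha).2
    have hpot : potential L a ≤ L + 4 :=
      potential_le (han.trans_lt (Nat.lt_pow_succ_log_self one_lt_two n))
    exact (hittingTime_le_mul_potential hn hT0 hrec a han).trans (by gcongr; exact_mod_cast hpot)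
  calc (1 / (n : ℝ)) * ∑ a ∈ Icc 1 n, T a ≤ (1 / n) * (n * (L * (L + 4))) := by
        gcongr
        simpa using sum_le_card_nsmul _ _ _ hT
    _ ≤ 5 * L ^ 2 := by field_simp; nlinarith
    _ ≤ 5 * (Real.log n / Real.log 2) ^ 2 := by gcongr
    _ = 5 / Real.log 2 ^ 2 * Real.log n ^ 2 := by ring
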